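/- arXiv:2203.02788 — 4 statements merged into one kernel-verified Lean document; each statement's English description precedes it below -/
import Mathlib

section
/- Let 0 < v* < v_max, φ ∈ (0, π/2) with cos(φ) > v*/v_max, and define q(v,θ) = (v_max·v·cos(θ) + v*·v_max − 2·v*·v)/(2·(v_max − v)²·v²). Then for all v ∈ (0, v_max) and θ ∈ (−φ, φ), q(v,θ) > 0 and 1/q(v,θ) ≤ 2·(v_max − v)·v²/v* ≤ 2·v_max³/v*. -/
open Real

/-- Positivity and bounds for (the reciprocal of) the gain function `q(v,θ)` of the
pseudo-relativistic cruise controller. -/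
theorem gain_q_bounds (vstar vmax φ : ℝ)
    (h0 : 0 < vstar) (h1 : vstar < vmax)
    (hφ : φ ∈ Set.Ioo 0 (π / 2)) (hcos : vstar / vmax < Real.cos φ)
    (q : ℝ → ℝ → ℝ)
    (hq : ∀ v θ, q v θ =
      (vmax * v * Real.cos θ + vstar * vmax - 2 * vstar * v) /
        (2 * (vmax - v) ^ 2 * v ^ 2)) :
    ∀ v ∈ Set.Ioo 0 vmax, ∀ θ ∈ Set.Ioo (-φ) φ,
      0 < q v θ ∧
      1 / q v θ ≤ 2 * (vmax - v) * v ^ 2 / vstar ∧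
      2 * (vmax - v) * v ^ 2 / vstar ≤ 2 * vmax ^ 3 / vstar := by
  intro v hv θ hθ
  obtain ⟨hv0, hvmax⟩ := hv
  obtain ⟨hθ1, hθ2⟩ := hθ
  obtain ⟨hφ0, hφ2⟩ := hφ
  have hvmax0 : (0:ℝ) < vmax := lt_trans h0 h1
  -- cos θ > cos φ
  have habs : |θ| < φ := abs_lt.mpr ⟨hθ1, hθ2⟩
  have hcosθ : Real.cos φ < Real.cos θ := by
    rw [← Real.cos_abs θ]
    exact Real.cos_lt_cos_of_nonneg_of_le_pi (abs_nonneg θ) (le_of_lt (lt_trans hφ2 (by linarith [Real.pi_pos]))) habs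
  have hcos' : vstar / vmax < Real.cos θ := lt_trans hcos hcosθ
  have hkey : vstar < vmax * Real.cos θ := by
    rw [div_lt_iff₀ hvmax0] at hcos'
    linarith
  -- numerator bound
  have hN : vstar * (vmax - v) < vmax * v * Real.cos θ + vstar * vmax - 2 * vstar * v := by
    nlinarith
  have hNpos : 0 < vmax * v * Real.cos θ + vstar * vmax - 2 * vstar * v := by
    nlinarith
  have hsub : 0 < vmax - v := by linarith
  have hDpos : 0 < 2 * (vmax - v) ^ 2 * v ^ 2 :=
    mul_pos (mul_pos two_pos (pow_pos hsub 2)) (pow_pos hv0 2)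
  have hqpos : 0 < q v θ := by
    rw [hq]; exact div_pos hNpos hDpos
  refine ⟨hqpos, ?_, ?_⟩
  · rw [hq, one_div, ← one_div, one_div_div]
    rw [div_le_div_iff₀ hNpos h0]
    nlinarith [sq_nonneg (vmax - v), sq_nonneg v]
  · gcongr ?_ / vstar
    nlinarith [sq_nonneg v, sq_nonneg (vmax - v)]
end

section
/- Let φ ∈ (0, π/2), A > 0, and suppose θ ∈ (−φ, φ) satisfies A·(1/(cos(θ) − cos(φ)) − 1/(1 − cos(φ))) ≤ H for some H ≥ 0. Then 1/(v_max·cos(θ) − v*) ≤ (A + (1 − cos(φ))·H)/(A·(v_max − v*) + (v_max·cos(φ) − v*)·(1 − cos(φ))·H), provided 0 < v* < v_max and cos(φ) > v*/v_max. -/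
open Real

/-- Estimate (5.46): a bound on `1/(v_max cos θ − v*)` in terms of the value of the
orientation penalty term of the Lyapunov function. -/
theorem penalty_gain_bound (vstar vmax φ A H θ : ℝ)
    (h0 : 0 < vstar) (h1 : vstar < vmax)
    (hφ : φ ∈ Set.Ioo 0 (π / 2)) (hcos : vstar / vmax < Real.cos φ)
    (hA : 0 < A) (hH : 0 ≤ H)
    (hθ : θ ∈ Set.Ioo (-φ) φ)
    (hpen : A * (1 / (Real.cos θ - Real.cos φ) - 1 / (1 - Real.cos φ)) ≤ H) :
    1 / (vmax * Real.cos θ - vstar) ≤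
      (A + (1 - Real.cos φ) * H) /
        (A * (vmax - vstar) + (vmax * Real.cos φ - vstar) * (1 - Real.cos φ) * H) := by
  obtain ⟨hφ0, hφπ⟩ := hφ
  obtain ⟨hθ1, hθ2⟩ := hθ
  have hvmax : 0 < vmax := lt_trans h0 h1
  have hπ : φ ≤ π := le_trans hφπ.le (by linarith [Real.pi_pos])
  have hcφ1 : Real.cos φ < 1 := by
    have := Real.cos_lt_cos_of_nonneg_of_le_pi (le_refl 0) hπ hφ0
    simpa using this
  have hccφ : Real.cos φ < Real.cos θ := by
    have habs : |θ| < φ := abs_lt.mpr ⟨hθ1, hθ2⟩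
    have := Real.cos_lt_cos_of_nonneg_of_le_pi (abs_nonneg θ) hπ habs
    rwa [Real.cos_abs] at this
  have hx : 0 < Real.cos θ - Real.cos φ := by linarith
  have hy : 0 < 1 - Real.cos φ := by linarith
  have hvc : vstar < vmax * Real.cos φ := by
    have := (div_lt_iff₀ hvmax).mp hcos
    linarith
  have hL : 0 < vmax * Real.cos θ - vstar := by nlinarith
  have hD : 0 < A + (1 - Real.cos φ) * H := by positivity
  -- key inequality from hpen
  have key : A * (1 - Real.cos φ) ≤ (Real.cos θ - Real.cos φ) * (A + (1 - Real.cos φ) * H) := by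
    have h2 := hpen
    rw [div_sub_div _ _ (ne_of_gt hx) (ne_of_gt hy), mul_div_assoc', div_le_iff₀ (mul_pos hx hy)] at h2
    nlinarith [h2]
  have hR : 0 < A * (vmax - vstar) + (vmax * Real.cos φ - vstar) * (1 - Real.cos φ) * H := by
    have := mul_nonneg (mul_nonneg (sub_pos.mpr hvc).le hy.le) hH
    nlinarith [mul_pos hA (sub_pos.mpr h1)]
  rw [div_le_div_iff₀ hL hR]
  nlinarith [mul_le_mul_of_nonneg_left key hvmax.le, mul_pos (sub_pos.mpr hvc) hD]
end

section
/- Let v_max > 0, φ ∈ (0, π/2), p ≥ 1, and let (v₁,θ₁), (v₂,θ₂) ∈ (0, v_max) × (−φ, φ). Then sqrt((v₁·cos(θ₁) − v₂·cos(θ₂))² + p·(v₁·sin(θ₁) − v₂·sin(θ₂))²) ≤ √2·v_max·sqrt(1 + (2p − 1)·sin²(φ)). -/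
set_option maxHeartbeats 1000000


open Real

/-- Estimate (5.34): bound on the relative velocity in the weighted metric. -/
theorem relative_velocity_bound (vmax φ p v₁ θ₁ v₂ θ₂ : ℝ)
    (hvmax : 0 < vmax) (hφ : φ ∈ Set.Ioo 0 (π / 2)) (hp : 1 ≤ p)
    (hv₁ : v₁ ∈ Set.Ioo 0 vmax) (hθ₁ : θ₁ ∈ Set.Ioo (-φ) φ)
    (hv₂ : v₂ ∈ Set.Ioo 0 vmax) (hθ₂ : θ₂ ∈ Set.Ioo (-φ) φ) :
    Real.sqrt ((v₁ * Real.cos θ₁ - v₂ * Real.cos θ₂) ^ 2 +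
        p * (v₁ * Real.sin θ₁ - v₂ * Real.sin θ₂) ^ 2) ≤
      Real.sqrt 2 * vmax * Real.sqrt (1 + (2 * p - 1) * Real.sin φ ^ 2) := by
  obtain ⟨hφ0, hφ2⟩ := hφ
  obtain ⟨hv₁0, hv₁m⟩ := hv₁
  obtain ⟨hv₂0, hv₂m⟩ := hv₂
  obtain ⟨hθ₁l, hθ₁r⟩ := hθ₁
  obtain ⟨hθ₂l, hθ₂r⟩ := hθ₂
  have hpi := Real.pi_pos
  set S := Real.sin φ ^ 2 with hS
  -- sin φ bounds
  have hsφ : 0 < Real.sin φ := Real.sin_pos_of_pos_of_lt_pi hφ0 (by linarith)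
  have hsφ1 : Real.sin φ ≤ 1 := Real.sin_le_one φ
  have hS1 : S ≤ 1 := by nlinarith
  have hS0 : 0 ≤ S := sq_nonneg _
  -- |sin θᵢ| ≤ sin φ
  have hsin : ∀ θ : ℝ, -φ < θ → θ < φ → Real.sin θ ^ 2 ≤ S := by
    intro θ h1 h2
    have hle : Real.sin θ ≤ Real.sin φ :=
      Real.sin_le_sin_of_le_of_le_pi_div_two (by linarith) (by linarith) h2.le
    have hge : -Real.sin φ ≤ Real.sin θ := by
      have := Real.sin_le_sin_of_le_of_le_pi_div_two (x := -φ) (by linarith) (by linarith) h1.le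
      rwa [Real.sin_neg] at this
    nlinarith
  have hs₁ := hsin θ₁ hθ₁l hθ₁r
  have hs₂ := hsin θ₂ hθ₂l hθ₂r
  -- cos (θ₁ - θ₂) ≥ 1 - 2 S
  have hK : 1 - 2 * S ≤ Real.cos (θ₁ - θ₂) := by
    have h1 : Real.cos (2 * φ) ≤ Real.cos |θ₁ - θ₂| := by
      apply Real.cos_le_cos_of_nonneg_of_le_pi (abs_nonneg _) (by linarith)
      rw [abs_le]; constructor <;> linarith
    rw [Real.cos_abs] at h1
    have h2 : Real.cos (2 * φ) = 1 - 2 * S := by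
      rw [Real.cos_two_mul, hS]
      have := Real.sin_sq_add_cos_sq φ
      ring_nf
      nlinarith
    linarith
  rw [Real.cos_sub] at hK
  -- main polynomial bound
  have hpyth₁ := Real.sin_sq_add_cos_sq θ₁
  have hpyth₂ := Real.sin_sq_add_cos_sq θ₂
  have key : (v₁ * Real.cos θ₁ - v₂ * Real.cos θ₂) ^ 2 +
      p * (v₁ * Real.sin θ₁ - v₂ * Real.sin θ₂) ^ 2 ≤
      2 * vmax ^ 2 * (1 + (2 * p - 1) * S) := by
    have hΔy : (v₁ * Real.sin θ₁ - v₂ * Real.sin θ₂) ^ 2 ≤ 4 * vmax ^ 2 * S := by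
      have h1 : v₁ ^ 2 * Real.sin θ₁ ^ 2 ≤ vmax ^ 2 * S :=
        mul_le_mul (by nlinarith) hs₁ (sq_nonneg _) (by positivity)
      have h2 : v₂ ^ 2 * Real.sin θ₂ ^ 2 ≤ vmax ^ 2 * S :=
        mul_le_mul (by nlinarith) hs₂ (sq_nonneg _) (by positivity)
      nlinarith [sq_nonneg (v₁ * Real.sin θ₁ + v₂ * Real.sin θ₂), h1, h2]
    have hxy : (v₁ * Real.cos θ₁ - v₂ * Real.cos θ₂) ^ 2 +
        (v₁ * Real.sin θ₁ - v₂ * Real.sin θ₂) ^ 2 ≤ 2 * vmax ^ 2 * (1 + S) := by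
      have hexp : (v₁ * Real.cos θ₁ - v₂ * Real.cos θ₂) ^ 2 +
          (v₁ * Real.sin θ₁ - v₂ * Real.sin θ₂) ^ 2 =
          v₁ ^ 2 + v₂ ^ 2 - 2 * v₁ * v₂ * (Real.cos θ₁ * Real.cos θ₂ +
            Real.sin θ₁ * Real.sin θ₂) := by nlinarith [hpyth₁, hpyth₂]
      rw [hexp]
      rcases le_or_gt (1 - 2 * S) 0 with h | h
      · have h3 : 0 ≤ (v₁ * v₂) * ((Real.cos θ₁ * Real.cos θ₂ +
            Real.sin θ₁ * Real.sin θ₂) - (1 - 2 * S)) :=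
          mul_nonneg (mul_pos hv₁0 hv₂0).le (by linarith)
        have h4 : S * v₁ ^ 2 ≤ S * vmax ^ 2 := mul_le_mul_of_nonneg_left (by nlinarith) hS0
        have h5 : S * v₂ ^ 2 ≤ S * vmax ^ 2 := mul_le_mul_of_nonneg_left (by nlinarith) hS0
        have h6 : 0 ≤ (2 * S - 1) * (v₁ - v₂) ^ 2 :=
          mul_nonneg (by linarith) (sq_nonneg _)
        nlinarith [sq_nonneg vmax]
      · nlinarith [mul_pos hv₁0 hv₂0]
    nlinarith
  calc Real.sqrt ((v₁ * Real.cos θ₁ - v₂ * Real.cos θ₂) ^ 2 +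
        p * (v₁ * Real.sin θ₁ - v₂ * Real.sin θ₂) ^ 2)
      ≤ Real.sqrt (2 * vmax ^ 2 * (1 + (2 * p - 1) * S)) := Real.sqrt_le_sqrt key
    _ = Real.sqrt 2 * vmax * Real.sqrt (1 + (2 * p - 1) * S) := by
        rw [Real.sqrt_mul (by positivity), Real.sqrt_mul (by norm_num),
          Real.sqrt_sq hvmax.le]
end

section
/- Let M > 0, v_max > 0 and suppose v : [0,∞) → ℝ is differentiable with v(0) ∈ (0, v_max) and satisfies, for all t ≥ 0, −k(t)·v(t) ≤ v'(t) ≤ k(t)·(v_max − v(t)) for some measurable k with 0 < k(t) ≤ M. Then for all t ≥ 0: v(0)·exp(−M·t) ≤ v(t) ≤ v(0)·exp(−M·t) + (1 − exp(−M·t))·v_max; in particular 0 < v(t) < v_max for all t ≥ 0. -/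
open Real

/-- Auxiliary Grönwall-type lemma: if `u` is differentiable, positive at `0`,
and `deriv u t ≥ -(j t * u t)` with `j t ≤ M` for `t ≥ 0`, then
`u t ≥ u 0 * exp (-M t) > 0` for all `t ≥ 0`. -/
lemma aux_pos_bound (M : ℝ) (hM : 0 < M) (u j : ℝ → ℝ)
    (hdiff : Differentiable ℝ u) (hu0 : 0 < u 0)
    (hj : ∀ t, 0 ≤ t → j t ≤ M)
    (hlo : ∀ t, 0 ≤ t → -(j t * u t) ≤ deriv u t) :
    ∀ t, 0 ≤ t → 0 < u t ∧ u 0 * Real.exp (-M * t) ≤ u t := by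
  set w : ℝ → ℝ := fun s => u s * Real.exp (M * s) with hwdef
  have hw : ∀ t : ℝ, HasDerivAt w
      (deriv u t * Real.exp (M * t) + u t * (Real.exp (M * t) * (M * 1))) t := by
    intro t
    exact (hdiff t).hasDerivAt.mul (((hasDerivAt_id t).const_mul M).exp)
  have hwderiv : ∀ t : ℝ, deriv w t
      = deriv u t * Real.exp (M * t) + u t * (Real.exp (M * t) * (M * 1)) :=
    fun t => (hw t).deriv
  have hwdiff : Differentiable ℝ w := fun t => (hw t).differentiableAt
  have key : ∀ t, 0 ≤ t → 0 ≤ u t → 0 ≤ deriv w t := by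
    intro t ht hu
    have h1 := hlo t ht
    have h2 : j t * u t ≤ M * u t := mul_le_mul_of_nonneg_right (hj t ht) hu
    have h3 : 0 ≤ (deriv u t + M * u t) * Real.exp (M * t) :=
      mul_nonneg (by linarith) (Real.exp_pos _).le
    rw [hwderiv]
    nlinarith [h3]
  -- positivity of u on [0, ∞)
  have hpos : ∀ t, 0 ≤ t → 0 < u t := by
    by_contra h
    push_neg at h
    obtain ⟨t1, ht1, hut1⟩ := h
    set S : Set ℝ := {t | 0 ≤ t} ∩ {t | u t ≤ 0} with hSdef
    have hScl : IsClosed S :=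
      (isClosed_le continuous_const continuous_id).inter
        (isClosed_le hdiff.continuous continuous_const)
    have hne : S.Nonempty := ⟨t1, ht1, hut1⟩
    have hbd : BddBelow S := ⟨0, fun x hx => hx.1⟩
    set t0 := sInf S with ht0def
    have ht0 : t0 ∈ S := hScl.csInf_mem hne hbd
    have ht0nonneg : 0 ≤ t0 := ht0.1
    have ht0pos : 0 < t0 := by
      rcases lt_or_eq_of_le ht0nonneg with h | h
      · exact h
      · exfalso; have := ht0.2; rw [← h] at this
        simp only [Set.mem_setOf_eq] at this; linarith
    have hup : ∀ t, 0 ≤ t → t < t0 → 0 < u t := by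
      intro t ht htlt
      by_contra hle
      push_neg at hle
      have : t0 ≤ t := csInf_le hbd ⟨ht, hle⟩
      linarith
    have hmono : MonotoneOn w (Set.Icc 0 t0) := by
      apply monotoneOn_of_deriv_nonneg (convex_Icc 0 t0) hwdiff.continuous.continuousOn
        (hwdiff.differentiableOn.mono interior_subset)
      intro x hx
      rw [interior_Icc] at hx
      exact key x hx.1.le (hup x hx.1.le hx.2).le
    have hle : w 0 ≤ w t0 :=
      hmono ⟨le_refl 0, ht0nonneg⟩ ⟨ht0nonneg, le_refl t0⟩ ht0nonneg
    have hw0 : w 0 = u 0 := by simp [hwdef]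
    have hwt0 : w t0 ≤ 0 := by
      have := ht0.2
      have he := (Real.exp_pos (M * t0)).le
      simpa [hwdef] using mul_nonpos_of_nonpos_of_nonneg this he
    linarith
  -- monotonicity of w on [0, ∞) and conclusion
  intro t ht
  refine ⟨hpos t ht, ?_⟩
  have hmono : MonotoneOn w (Set.Icc 0 t) := by
    apply monotoneOn_of_deriv_nonneg (convex_Icc 0 t) hwdiff.continuous.continuousOn
      (hwdiff.differentiableOn.mono interior_subset)
    intro x hx
    rw [interior_Icc] at hx
    exact key x hx.1.le (hpos x hx.1.le).le
  have hle : w 0 ≤ w t := hmono ⟨le_refl 0, ht⟩ ⟨ht, le_refl t⟩ ht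
  have hw0 : w 0 = u 0 := by simp [hwdef]
  have hE : Real.exp (M * t) * Real.exp (-M * t) = 1 := by
    rw [← Real.exp_add]; ring_nf; exact Real.exp_zero
  have h1 : u 0 ≤ u t * Real.exp (M * t) := by
    rw [hw0] at hle; exact hle
  have h2 := mul_le_mul_of_nonneg_right h1 (Real.exp_pos (-M * t)).le
  calc u 0 * Real.exp (-M * t) ≤ u t * Real.exp (M * t) * Real.exp (-M * t) := h2
    _ = u t * (Real.exp (M * t) * Real.exp (-M * t)) := by ring
    _ = u t := by rw [hE, mul_one]

/-- Comparison estimate (5.52)–(5.53): a speed trapped by the differential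
inequalities stays in `(0, v_max)` with explicit exponential bounds. -/
theorem speed_comparison (M vmax : ℝ) (v k : ℝ → ℝ)
    (hM : 0 < M) (hvmax : 0 < vmax)
    (hdiff : Differentiable ℝ v)
    (hv0 : v 0 ∈ Set.Ioo 0 vmax)
    (hk_meas : Measurable k)
    (hk : ∀ t, 0 ≤ t → 0 < k t ∧ k t ≤ M)
    (hlo : ∀ t, 0 ≤ t → -(k t * v t) ≤ deriv v t)
    (hhi : ∀ t, 0 ≤ t → deriv v t ≤ k t * (vmax - v t)) :
    ∀ t, 0 ≤ t →
      v 0 * Real.exp (-M * t) ≤ v t ∧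
      v t ≤ v 0 * Real.exp (-M * t) + (1 - Real.exp (-M * t)) * vmax ∧
      0 < v t ∧ v t < vmax := by
  have hlower := aux_pos_bound M hM v k hdiff hv0.1 (fun t ht => (hk t ht).2) hlo
  -- upper bound via u = vmax - v
  have hudiff : Differentiable ℝ (fun s => vmax - v s) := (differentiable_const vmax).sub hdiff
  have huderiv : ∀ t, deriv (fun s => vmax - v s) t = -deriv v t := by
    intro t
    have : HasDerivAt (fun s => vmax - v s) (0 - deriv v t) t :=
      (hasDerivAt_const t vmax).sub (hdiff t).hasDerivAt
    simpa using this.deriv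
  have hupper := aux_pos_bound M hM (fun s => vmax - v s) k hudiff
    (by simpa using hv0.2) (fun t ht => (hk t ht).2)
    (fun t ht => by
      rw [huderiv t]; have := hhi t ht
      show -(k t * (vmax - v t)) ≤ -deriv v t
      linarith)
  intro t ht
  obtain ⟨hp1, hp2⟩ := hlower t ht
  obtain ⟨hq1, hq2⟩ := hupper t ht
  refine ⟨hp2, ?_, hp1, by linarith⟩
  nlinarith [hq2]
end
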